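/- arXiv:1909.09401 — 9 statements merged into one kernel-verified Lean document; each statement's English description precedes it below -/
import Mathlib

section
/- For all ceers S, T and every k ≥ 0: S ≡ T if and only if S ⊕ Id_k ≡ T ⊕ Id_k, where Id_k is the equivalence relation with exactly k classes (and S ⊕ Id_0 = S). -/
/-- Computable reducibility of binary relations on ℕ. -/
def CompReduces (R S : ℕ → ℕ → Prop) : Prop :=
  ∃ f : ℕ → ℕ, Computable f ∧ ∀ x y, (R x y ↔ S (f x) (f y))

/-- Bi-reducibility. -/
def CompEquiv (R S : ℕ → ℕ → Prop) : Prop :=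
  CompReduces R S ∧ CompReduces S R

/-- Uniform join: evens code `R`, odds code `S`. -/
def UJoin (R S : ℕ → ℕ → Prop) : ℕ → ℕ → Prop := fun x y =>
  (∃ u v, x = 2 * u ∧ y = 2 * v ∧ R u v) ∨
  (∃ u v, x = 2 * u + 1 ∧ y = 2 * v + 1 ∧ S u v)

/-- Congruence modulo `n` (for `n ≥ 1` this has exactly `n` classes). -/
def IdN (n : ℕ) : ℕ → ℕ → Prop := fun x y => x % n = y % n

/-- `R ⊕ Id_k`, with the convention `R ⊕ Id_0 = R`. -/
def OplusId (R : ℕ → ℕ → Prop) (k : ℕ) : ℕ → ℕ → Prop :=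
  if k = 0 then R else UJoin R (IdN k)

/-- A ceer: a computably enumerable equivalence relation on ℕ. -/
def IsCeer (R : ℕ → ℕ → Prop) : Prop :=
  Equivalence R ∧ REPred (fun p : ℕ × ℕ => R p.1 p.2)

/-- `R` has infinitely many equivalence classes. -/
def InfiniteClasses (R : ℕ → ℕ → Prop) : Prop :=
  ∀ A : Finset ℕ, ∃ x, ∀ a ∈ A, ¬ R x a

/-- `R` has exactly `n` equivalence classes. -/
def ExactlyNClasses (R : ℕ → ℕ → Prop) (n : ℕ) : Prop :=
  ∃ f : Fin n → ℕ, (∀ i j, i ≠ j → ¬ R (f i) (f j)) ∧ ∀ x, ∃ i, R x (f i)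

/-- `R` has an infinite c.e. transversal. -/
def HasInfiniteTransversal (R : ℕ → ℕ → Prop) : Prop :=
  ∃ W : Set ℕ, REPred (· ∈ W) ∧ W.Infinite ∧
    ∀ x ∈ W, ∀ y ∈ W, x ≠ y → ¬ R x y

/-- A dark ceer: infinitely many classes, no infinite c.e. transversal. -/
def IsDark (R : ℕ → ℕ → Prop) : Prop :=
  IsCeer R ∧ InfiniteClasses R ∧ ¬ HasInfiniteTransversal R

/-- `R ≤_I S`: `R ≤ S ⊕ Id_k` for some `k`. -/
def ReducesI (R S : ℕ → ℕ → Prop) : Prop :=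
  ∃ k, CompReduces R (OplusId S k)

/-- The c.e. set `W` intersects infinitely many `R`-classes. -/
def MeetsInfManyClasses (R : ℕ → ℕ → Prop) (W : Set ℕ) : Prop :=
  ∀ A : Finset ℕ, ∃ x ∈ W, ∀ a ∈ A, ¬ R x a

/-! Read through `ℕ ⊕ ℕ ≃ ℕ`, a reduction of `S ⊕ Id_k` to `T ⊕ Id_k` is a computable map `F` on
`ℕ ⊕ ℕ` preserving and reflecting `Sum.LiftRel`. Let `A` be the set of `Id_k`-classes that receive
elements of `S`, and `B` the set of `Id_k`-classes that `F` keeps on the `Id_k` side. Since no element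
of `S` is related to an element of `Id_k`, `F` maps `B` injectively into classes outside `A`, so at
least `|A|` of the `k` classes are sent into `T`. Rerouting the classes of `A` through distinct ones
of these turns `F` into a reduction of `S` to `T`; only finitely many values are changed, so the
result is still computable. -/

open Function Sum Set
open Equiv (natSumNatEquivNat)

lemma computable_natSumNatEquivNat : Computable natSumNatEquivNat :=
  Computable.encode.of_eq fun a => by cases a <;> rfl

lemma computable_natSumNatEquivNat_symm : Computable natSumNatEquivNat.symm :=
  (Computable.cond Computable.nat_bodd (Computable.sumInr.comp Computable.nat_div2)
    (Computable.sumInl.comp Computable.nat_div2)).of_eq fun n => by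
      simp only [Equiv.natSumNatEquivNat_symm_apply]; cases n.bodd <;> rfl

lemma computable_comp_mod (g : ℕ → ℕ) {k : ℕ} (hk : 0 < k) : Computable fun n => g (n % k) :=
  ((Primrec.list_getD 0).comp (Primrec.const ((List.range k).map g))
    (Primrec.nat_mod.comp Primrec.id (Primrec.const k))).to_comp.of_eq fun n => by
      simp [List.getD_eq_getElem?_getD, List.getElem?_range (Nat.mod_lt n hk)]

lemma uJoin_natSumNatEquivNat {R I : ℕ → ℕ → Prop} (a b : ℕ ⊕ ℕ) :
    UJoin R I (natSumNatEquivNat a) (natSumNatEquivNat b) ↔ LiftRel R I a b := by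
  cases a <;> cases b <;> simp [UJoin] <;> grind

lemma compReduces_uJoin_iff {R I R' I' : ℕ → ℕ → Prop} :
    CompReduces (UJoin R I) (UJoin R' I') ↔ ∃ F : ℕ ⊕ ℕ → ℕ ⊕ ℕ, Computable F ∧
      ∀ a b, LiftRel R I a b ↔ LiftRel R' I' (F a) (F b) := by
  constructor
  · rintro ⟨f, hfc, hf⟩
    refine ⟨natSumNatEquivNat.symm ∘ f ∘ natSumNatEquivNat,
      computable_natSumNatEquivNat_symm.comp (hfc.comp computable_natSumNatEquivNat),
      fun a b => ?_⟩
    simp only [comp_apply, ← uJoin_natSumNatEquivNat, Equiv.apply_symm_apply, hf]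
  · rintro ⟨F, hFc, hF⟩
    refine ⟨natSumNatEquivNat ∘ F ∘ natSumNatEquivNat.symm,
      computable_natSumNatEquivNat.comp (hFc.comp computable_natSumNatEquivNat_symm),
      fun x y => ?_⟩
    rw [← natSumNatEquivNat.apply_symm_apply x, ← natSumNatEquivNat.apply_symm_apply y]
    simp only [comp_apply, uJoin_natSumNatEquivNat, Equiv.symm_apply_apply, hF]

lemma CompReduces.uJoin_left {S T : ℕ → ℕ → Prop} (I : ℕ → ℕ → Prop) (h : CompReduces S T) :
    CompReduces (UJoin S I) (UJoin T I) := by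
  obtain ⟨f, hfc, hf⟩ := h
  refine compReduces_uJoin_iff.2 ⟨Sum.map f id, ?_, ?_⟩
  · exact (Computable.sumCasesOn Computable.id (Computable.sumInl.comp (hfc.comp .snd)).to₂
      (Computable.sumInr.comp .snd).to₂).of_eq fun a => by cases a <;> rfl
  · rintro (x | x) (y | y) <;> simp [hf]

lemma Set.Finite.exists_injOn_sdiff {α : Type*} [Nonempty α] {U A B : Set α} {β : α → α}
    (hU : U.Finite) (hA : A ⊆ U) (hB : B ⊆ U) (hβ : MapsTo β B (U \ A)) (hβinj : InjOn β B) :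
    ∃ ι : α → α, MapsTo ι A (U \ B) ∧ InjOn ι A := by
  have hBA := ncard_le_ncard_of_injOn β hβ hβinj hU.sdiff
  have hA' := ncard_sdiff_add_ncard_of_subset hA hU
  have hB' := ncard_sdiff_add_ncard_of_subset hB hU
  refine (hU.subset hA).exists_injOn_of_encard_le (t := U \ B) ?_
  rw [← (hU.subset hA).cast_ncard_eq, ← hU.sdiff.cast_ncard_eq]
  exact_mod_cast (by omega)

section Cancellation

variable {S T : ℕ → ℕ → Prop} {k : ℕ} {F : ℕ ⊕ ℕ → ℕ ⊕ ℕ}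

def collapsedResidues (F : ℕ ⊕ ℕ → ℕ ⊕ ℕ) (k : ℕ) : Set ℕ :=
  {r | ∃ x u, F (inl x) = inr u ∧ u % k = r}

lemma exists_injOn_collapsedResidues (hk : 0 < k)
    (hF : ∀ a b, LiftRel S (IdN k) a b ↔ LiftRel T (IdN k) (F a) (F b)) :
    ∃ ι : ℕ → ℕ, MapsTo ι (collapsedResidues F k) {g | g < k ∧ ∃ t, F (inr g) = inl t} ∧
      InjOn ι (collapsedResidues F k) := by
  let B := {g | g < k ∧ ∃ v, F (inr g) = inr v}
  let β := fun g => Sum.elim (fun _ => 0) (· % k) (F (inr g))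
  have hβmaps : MapsTo β B (Iio k \ collapsedResidues F k) := by
    rintro g ⟨-, v, hv⟩
    refine ⟨by simpa [β, hv] using Nat.mod_lt v hk, ?_⟩
    rintro ⟨x, u, hu, huv⟩
    have := hF (inl x) (inr g)
    simp_all [β, IdN]
  have hβinj : InjOn β B := by
    rintro g ⟨hg, v, hv⟩ g' ⟨hg', v', hv'⟩ hgg'
    have := hF (inr g) (inr g')
    simp_all [β, IdN, Nat.mod_eq_of_lt]
  obtain ⟨ι, hιmaps, hιinj⟩ := (finite_Iio k).exists_injOn_sdiff
    (by rintro _ ⟨x, u, -, rfl⟩; exact Nat.mod_lt u hk) (fun g hg => hg.1) hβmaps hβinj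
  refine ⟨ι, fun r hr => ?_, hιinj⟩
  obtain ⟨hlt, hnB⟩ := hιmaps hr
  cases h : F (inr (ι r)) with
  | inl t => exact ⟨hlt, t, h⟩
  | inr v => exact absurd ⟨hlt, v, h⟩ hnB

lemma exists_rerouting (hk : 0 < k)
    (hF : ∀ a b, LiftRel S (IdN k) a b ↔ LiftRel T (IdN k) (F a) (F b)) :
    ∃ c : ℕ → ℕ, (∀ r ∈ collapsedResidues F k, ∃ g, F (inr g) = inl (c r)) ∧
      ∀ r ∈ collapsedResidues F k, ∀ s ∈ collapsedResidues F k, T (c r) (c s) ↔ r = s := by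
  obtain ⟨ι, hιmaps, hιinj⟩ := exists_injOn_collapsedResidues hk hF
  set c : ℕ → ℕ := fun r => Sum.elim id (fun _ => 0) (F (inr (ι r)))
  have hc : ∀ r ∈ collapsedResidues F k, F (inr (ι r)) = inl (c r) := by
    intro r hr
    obtain ⟨-, t, ht⟩ := hιmaps hr
    simp [c, ht]
  refine ⟨c, fun r hr => ⟨ι r, hc r hr⟩, fun r hr s hs => ?_⟩
  have := hF (inr (ι r)) (inr (ι s))
  rw [hc r hr, hc s hs] at this
  simp only [liftRel_inr_inr, liftRel_inl_inl, IdN, Nat.mod_eq_of_lt (hιmaps hr).1,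
    Nat.mod_eq_of_lt (hιmaps hs).1] at this
  rw [← this]
  exact hιinj.eq_iff hr hs

lemma compReduces_of_liftRel_idN (hk : 0 < k) (hFc : Computable F)
    (hF : ∀ a b, LiftRel S (IdN k) a b ↔ LiftRel T (IdN k) (F a) (F b)) :
    CompReduces S T := by
  obtain ⟨c, hcF, hcT⟩ := exists_rerouting hk hF
  have hmixed : ∀ x u r, F (inl x) = inl u → r ∈ collapsedResidues F k →
      ¬ T u (c r) ∧ ¬ T (c r) u := by
    intro x u r hu hr
    obtain ⟨g, hg⟩ := hcF r hr
    have h₁ := hF (inl x) (inr g)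
    have h₂ := hF (inr g) (inl x)
    rw [hu, hg] at h₁ h₂
    simp_all
  refine ⟨fun x => Sum.elim id (fun u => c (u % k)) (F (inl x)), ?_, fun x y => ?_⟩
  · exact (Computable.sumCasesOn (hFc.comp Computable.sumInl) Computable.snd.to₂
      ((computable_comp_mod c hk).comp .snd).to₂).of_eq fun x => by cases F (inl x) <;> rfl
  rw [← liftRel_inl_inl (r := S) (s := IdN k), hF]
  dsimp only
  cases hx : F (inl x) with
  | inl u =>
    cases hy : F (inl y) with
    | inl v => simp
    | inr v => simpa using (hmixed x u _ hx ⟨y, v, hy, rfl⟩).1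
  | inr u =>
    cases hy : F (inl y) with
    | inl v => simpa using (hmixed y v _ hy ⟨x, u, hx, rfl⟩).2
    | inr v => simpa [IdN] using (hcT _ ⟨x, u, hx, rfl⟩ _ ⟨y, v, hy, rfl⟩).symm

lemma CompReduces.of_uJoin_idN (hk : 0 < k)
    (h : CompReduces (UJoin S (IdN k)) (UJoin T (IdN k))) : CompReduces S T :=
  let ⟨_, hFc, hF⟩ := compReduces_uJoin_iff.1 h
  compReduces_of_liftRel_idN hk hFc hF

end Cancellation

theorem equiv_iff_oplus_idk_equiv_general (S T : ℕ → ℕ → Prop) (k : ℕ) :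
    CompEquiv S T ↔ CompEquiv (OplusId S k) (OplusId T k) := by
  rcases Nat.eq_zero_or_pos k with rfl | hk
  · rfl
  · simp only [CompEquiv, OplusId, if_neg hk.ne']
    exact ⟨fun ⟨hST, hTS⟩ => ⟨hST.uJoin_left _, hTS.uJoin_left _⟩,
      fun ⟨hST, hTS⟩ => ⟨hST.of_uJoin_idN hk, hTS.of_uJoin_idN hk⟩⟩

theorem equiv_iff_oplus_idk_equiv (S T : ℕ → ℕ → Prop) (k : ℕ)
    (hS : IsCeer S) (hT : IsCeer T) :
    CompEquiv S T ↔ CompEquiv (OplusId S k) (OplusId T k) :=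
  equiv_iff_oplus_idk_equiv_general S T k
end

section
/- If f is a computable reduction from a ceer R to a ceer S whose range omits exactly k equivalence classes of S, then R ⊕ Id_k ≡ S. -/
open Nat.Partrec (Code)
open Nat.Partrec.Code

theorem REPred.exists_code_eval_dom_iff {P : ℕ → ℕ → Prop}
    (hP : REPred fun p : ℕ × ℕ => P p.1 p.2) :
    ∃ c : Code, ∀ y n, P y n ↔ (eval c (Nat.pair y n)).Dom := by
  have hnat : Nat.Partrec fun m : ℕ =>
      (Part.assert (P m.unpair.1 m.unpair.2) fun _ => Part.some ()).map fun _ => (0 : ℕ) :=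
    Partrec.nat_iff.1 <| (hP.comp Computable.unpair).map (Computable.const 0).to₂
  obtain ⟨c, hc⟩ := exists_code.1 hnat
  exact ⟨c, fun y n => by simp [hc, Part.assert]⟩

/-- Uniformization of a total c.e. relation: search through pairs `(n, s)` until the
`s`-step approximation of the enumeration confirms `P y n`. -/
theorem REPred.exists_computable_choice {P : ℕ → ℕ → Prop}
    (hP : REPred fun p : ℕ × ℕ => P p.1 p.2) (htot : ∀ y, ∃ n, P y n) :
    ∃ G : ℕ → ℕ, Computable G ∧ ∀ y, P y (G y) := by
  obtain ⟨c, hc⟩ := hP.exists_code_eval_dom_iff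
  let test : ℕ → ℕ → Option ℕ := fun y m =>
    (evaln m.unpair.2 c (Nat.pair y m.unpair.1)).map fun _ => m.unpair.1
  have htest : Computable₂ test := by
    have hstep : Computable fun p : ℕ × ℕ => evaln p.2.unpair.2 c (Nat.pair p.1 p.2.unpair.1) :=
      primrec_evaln.to_comp.comp <|
        ((Computable.snd.comp (Computable.unpair.comp Computable.snd)).pair
          (Computable.const c)).pair
        (Primrec₂.natPair.to_comp.comp Computable.fst
          (Computable.fst.comp (Computable.unpair.comp Computable.snd)))
    exact hstep.option_map
      (Computable.fst.comp (Computable.unpair.comp (Computable.snd.comp Computable.fst))).to₂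
  have hsound : ∀ y m n, n ∈ test y m → P y n := by
    intro y m n hn
    obtain ⟨a, ha, rfl⟩ := Option.map_eq_some_iff.1 hn
    exact (hc _ _).2 (Part.dom_iff_mem.2 ⟨a, evaln_sound ha⟩)
  have hdom : ∀ y, (Nat.rfindOpt (test y)).Dom := fun y => by
    obtain ⟨n, hn⟩ := htot y
    obtain ⟨a, ha⟩ := Part.dom_iff_mem.1 ((hc y n).1 hn)
    obtain ⟨s, hs⟩ := evaln_complete.1 ha
    exact Nat.rfindOpt_dom.2 ⟨Nat.pair n s, n, by simp [test, Option.mem_def.1 hs]⟩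
  refine ⟨fun y => (Nat.rfindOpt (test y)).get (hdom y),
    (Partrec.rfindOpt htest).of_eq_tot fun y => Part.get_mem _, fun y => ?_⟩
  obtain ⟨m, hm⟩ := Nat.rfindOpt_spec (Part.get_mem (hdom y))
  exact hsound y m _ hm

section UJoin

variable {R T : ℕ → ℕ → Prop} {u v : ℕ}

theorem uJoin_two_mul_two_mul : UJoin R T (2 * u) (2 * v) ↔ R u v := by
  simp only [UJoin]
  constructor
  · rintro (⟨u', v', hu, hv, h⟩ | ⟨u', v', hu, hv, -⟩)
    · obtain rfl : u' = u := by omega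
      obtain rfl : v' = v := by omega
      exact h
    · omega
  · exact fun h => Or.inl ⟨u, v, rfl, rfl, h⟩

theorem uJoin_two_mul_add_one_two_mul_add_one :
    UJoin R T (2 * u + 1) (2 * v + 1) ↔ T u v := by
  simp only [UJoin]
  constructor
  · rintro (⟨u', v', hu, hv, -⟩ | ⟨u', v', hu, hv, h⟩)
    · omega
    · obtain rfl : u' = u := by omega
      obtain rfl : v' = v := by omega
      exact h
  · exact fun h => Or.inr ⟨u, v, rfl, rfl, h⟩

theorem not_uJoin_two_mul_two_mul_add_one : ¬ UJoin R T (2 * u) (2 * v + 1) := by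
  rintro (⟨u', v', hu, hv, -⟩ | ⟨u', v', hu, hv, -⟩) <;> omega

theorem not_uJoin_two_mul_add_one_two_mul : ¬ UJoin R T (2 * u + 1) (2 * v) := by
  rintro (⟨u', v', hu, hv, -⟩ | ⟨u', v', hu, hv, -⟩) <;> omega

end UJoin

theorem compReduces_of_rel_rightInverse {R S : ℕ → ℕ → Prop} (hS : Equivalence S)
    {F G : ℕ → ℕ} (hF : ∀ x y, R x y ↔ S (F x) (F y)) (hG : Computable G)
    (hFG : ∀ y, S y (F (G y))) : CompReduces S R :=
  ⟨G, hG, fun y z => by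
    rw [hF]
    exact ⟨fun h => hS.trans (hS.trans (hS.symm (hFG y)) h) (hFG z),
      fun h => hS.trans (hS.trans (hFG y) h) (hS.symm (hFG z))⟩⟩

section OplusMap

variable {k : ℕ}

def oplusMap (f : ℕ → ℕ) (g : Fin k → ℕ) : ℕ → ℕ :=
  if hk : k = 0 then f
  else fun n =>
    if n % 2 = 0 then f (n / 2) else g ⟨n / 2 % k, Nat.mod_lt _ (Nat.pos_of_ne_zero hk)⟩

theorem oplusMap_two_mul (f : ℕ → ℕ) (g : Fin k → ℕ) (hk : k ≠ 0) (u : ℕ) :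
    oplusMap f g (2 * u) = f u := by
  simp [oplusMap, hk]

theorem oplusMap_two_mul_add_one (f : ℕ → ℕ) (g : Fin k → ℕ) (hk : k ≠ 0) (u : ℕ) :
    oplusMap f g (2 * u + 1) = g ⟨u % k, Nat.mod_lt _ (Nat.pos_of_ne_zero hk)⟩ := by
  have hu : (2 * u + 1) / 2 = u := by omega
  simp [oplusMap, hk, hu]

theorem computable_oplusMap {f : ℕ → ℕ} (hf : Computable f) (g : Fin k → ℕ) :
    Computable (oplusMap f g) := by
  unfold oplusMap
  split_ifs with hk
  · exact hf
  have hidx : Primrec fun n : ℕ => (⟨n / 2 % k, Nat.mod_lt _ (Nat.pos_of_ne_zero hk)⟩ : Fin k) :=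
    Primrec.fin_val_iff.1 <| Primrec.nat_mod.comp
      (Primrec.nat_div.comp Primrec.id (Primrec.const 2)) (Primrec.const k)
  exact ComputablePred.ite (hf.comp (Primrec.nat_div.comp Primrec.id (Primrec.const 2)).to_comp)
    ((Primrec.dom_finite g).comp hidx).to_comp
    (PrimrecPred.computablePred (Primrec.eq.comp (Primrec.nat_mod.comp Primrec.id
      (Primrec.const 2)) (Primrec.const 0)))

theorem range_subset_range_oplusMap_left (f : ℕ → ℕ) (g : Fin k → ℕ) :
    Set.range f ⊆ Set.range (oplusMap f g) := by
  rintro _ ⟨x, rfl⟩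
  rcases eq_or_ne k 0 with rfl | hk
  · exact ⟨x, by simp [oplusMap]⟩
  · exact ⟨2 * x, oplusMap_two_mul f g hk x⟩

theorem range_subset_range_oplusMap_right (f : ℕ → ℕ) (g : Fin k → ℕ) :
    Set.range g ⊆ Set.range (oplusMap f g) := by
  rintro _ ⟨i, rfl⟩
  have hk : k ≠ 0 := Nat.pos_iff_ne_zero.1 i.pos
  exact ⟨2 * i + 1, by simp [oplusMap_two_mul_add_one f g hk, Nat.mod_eq_of_lt i.isLt]⟩

theorem exists_rel_oplusMap {S : ℕ → ℕ → Prop} (hS : Equivalence S) {f : ℕ → ℕ} {g : Fin k → ℕ}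
    (hg_all : ∀ y, (∀ x, ¬ S (f x) y) → ∃ i, S y (g i)) (y : ℕ) :
    ∃ n, S y (oplusMap f g n) := by
  by_cases hy : ∃ x, S (f x) y
  · obtain ⟨x, hx⟩ := hy
    obtain ⟨n, hn⟩ := range_subset_range_oplusMap_left f g ⟨x, rfl⟩
    exact ⟨n, hn ▸ hS.symm hx⟩
  · push Not at hy
    obtain ⟨i, hi⟩ := hg_all y hy
    obtain ⟨n, hn⟩ := range_subset_range_oplusMap_right f g ⟨i, rfl⟩
    exact ⟨n, hn ▸ hi⟩

theorem oplusId_iff_oplusMap {R S : ℕ → ℕ → Prop} (hS : Equivalence S) {f : ℕ → ℕ}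
    {g : Fin k → ℕ} (hred : ∀ x y, R x y ↔ S (f x) (f y))
    (hg_ineq : ∀ i j, i ≠ j → ¬ S (g i) (g j)) (hg_omitted : ∀ i x, ¬ S (f x) (g i))
    (x y : ℕ) : OplusId R k x y ↔ S (oplusMap f g x) (oplusMap f g y) := by
  rcases eq_or_ne k 0 with rfl | hk
  · simp [OplusId, oplusMap, hred]
  have hg : ∀ i j, S (g i) (g j) ↔ i = j := fun i j =>
    ⟨not_imp_not.1 (hg_ineq i j), fun h => h ▸ hS.refl _⟩
  simp only [OplusId, if_neg hk]
  obtain ⟨u, rfl | rfl⟩ := Nat.even_or_odd' x <;> obtain ⟨v, rfl | rfl⟩ := Nat.even_or_odd' y <;>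
    simp only [oplusMap_two_mul _ _ hk, oplusMap_two_mul_add_one _ _ hk]
  · exact uJoin_two_mul_two_mul.trans (hred u v)
  · exact iff_of_false not_uJoin_two_mul_two_mul_add_one (hg_omitted _ _)
  · exact iff_of_false not_uJoin_two_mul_add_one_two_mul fun h => hg_omitted _ _ (hS.symm h)
  · rw [uJoin_two_mul_add_one_two_mul_add_one, hg, Fin.ext_iff]
    rfl

end OplusMap

theorem reduction_omitting_k_classes_general (R S : ℕ → ℕ → Prop) (k : ℕ)
    (hS : IsCeer S)
    (f : ℕ → ℕ) (hf : Computable f) (hred : ∀ x y, R x y ↔ S (f x) (f y))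
    (g : Fin k → ℕ)
    (hg_ineq : ∀ i j, i ≠ j → ¬ S (g i) (g j))
    (hg_omitted : ∀ i, ∀ x, ¬ S (f x) (g i))
    (hg_all : ∀ y, (∀ x, ¬ S (f x) y) → ∃ i, S y (g i)) :
    CompEquiv (OplusId R k) S := by
  obtain ⟨hSeq, hSre⟩ := hS
  have hF := oplusId_iff_oplusMap hSeq hred hg_ineq hg_omitted
  have hF_computable := computable_oplusMap hf g
  have hsearch : REPred fun p : ℕ × ℕ => S p.1 (oplusMap f g p.2) :=
    hSre.comp (Computable.fst.pair (hF_computable.comp Computable.snd))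
  obtain ⟨G, hG_computable, hG⟩ :=
    hsearch.exists_computable_choice (exists_rel_oplusMap hSeq hg_all)
  exact ⟨⟨oplusMap f g, hF_computable, hF⟩,
    compReduces_of_rel_rightInverse hSeq hF hG_computable hG⟩

theorem reduction_omitting_k_classes (R S : ℕ → ℕ → Prop) (k : ℕ)
    (hR : IsCeer R) (hS : IsCeer S)
    (f : ℕ → ℕ) (hf : Computable f) (hred : ∀ x y, R x y ↔ S (f x) (f y))
    (g : Fin k → ℕ)
    (hg_ineq : ∀ i j, i ≠ j → ¬ S (g i) (g j))
    (hg_omitted : ∀ i, ∀ x, ¬ S (f x) (g i))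
    (hg_all : ∀ y, (∀ x, ¬ S (f x) y) → ∃ i, S y (g i)) :
    CompEquiv (OplusId R k) S :=
  reduction_omitting_k_classes_general R S k hS f hf hred g hg_ineq hg_omitted hg_all
end

section
/- If W is a non-empty c.e. set such that there are exactly k R-classes of a ceer R disjoint from W and every other R-class meets W, then R↾W ⊕ Id_k ≡ R. -/
open Nat.Partrec (Code)
open Nat.Partrec.Code

lemma aux_compEquiv (R S : ℕ → ℕ → Prop) (hEq : Equivalence R)
    (hRe : REPred (fun p : ℕ × ℕ => R p.1 p.2)) (c : ℕ → ℕ) (hc : Computable c)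
    (hKey : ∀ a b, S a b ↔ R (c a) (c b)) (hTot : ∀ x, ∃ n, R x (c n)) :
    CompEquiv S R := by
  constructor
  · exact ⟨c, hc, hKey⟩
  · set P : ℕ →. ℕ := fun m =>
      ((fun p : ℕ × ℕ => Part.assert (R p.1 p.2) fun _ => Part.some ())
        (m.unpair.1, c m.unpair.2)).map (fun _ => 0) with hPdef
    have hP : Partrec P :=
      (hRe.comp (Computable.pair
        ((Primrec.fst.comp Primrec.unpair).to_comp)
        (hc.comp (Primrec.snd.comp Primrec.unpair).to_comp))).map
        ((Computable.const 0).to₂)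
    have hPdom : ∀ x n, (P (Nat.pair x n)).Dom ↔ R x (c n) := by
      intro x n
      simp [hPdef, Part.assert]
    obtain ⟨cp, hcp⟩ := Nat.Partrec.Code.exists_code.1 (Partrec.nat_iff.1 hP)
    set e : ℕ → ℕ → Option ℕ := fun x m =>
      (evaln m.unpair.2 cp (Nat.pair x m.unpair.1)).map (fun _ => m.unpair.1) with hedef
    have hev : Primrec fun p : ℕ × ℕ =>
        evaln p.2.unpair.2 cp (Nat.pair p.1 p.2.unpair.1) :=
      primrec_evaln.comp
        (((Primrec.snd.comp (Primrec.unpair.comp Primrec.snd)).pair (Primrec.const cp)).pair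
          (Primrec₂.natPair.comp Primrec.fst (Primrec.fst.comp (Primrec.unpair.comp Primrec.snd))))
    have he : Computable₂ e := by
      have : Primrec fun p : ℕ × ℕ => e p.1 p.2 :=
        Primrec.option_map hev
          ((Primrec.fst.comp (Primrec.unpair.comp (Primrec.snd.comp Primrec.fst))).to₂)
      exact this.to_comp
    have hdom : ∀ x, (Nat.rfindOpt (e x)).Dom := by
      intro x
      obtain ⟨n, hn⟩ := hTot x
      obtain ⟨y, hy⟩ := Part.dom_iff_mem.1 ((hPdom x n).2 hn)
      rw [← hcp] at hy
      obtain ⟨s, hs⟩ := evaln_complete.1 hy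
      refine Nat.rfindOpt_dom.2 ⟨Nat.pair n s, n, ?_⟩
      simp only [hedef, Nat.unpair_pair]
      simp [Option.mem_def] at hs ⊢
      exact ⟨y, hs⟩
    have hsound : ∀ x n, n ∈ Nat.rfindOpt (e x) → R x (c n) := by
      intro x n hn
      obtain ⟨m, hm⟩ := Nat.rfindOpt_spec hn
      simp only [hedef, Option.mem_def, Option.map_eq_some_iff] at hm
      obtain ⟨y, hy, rfl⟩ := hm
      have := evaln_sound hy
      rw [hcp] at this
      exact (hPdom x m.unpair.1).1 (Part.dom_iff_mem.2 ⟨y, this⟩)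
    set f : ℕ → ℕ := fun x => (Nat.rfindOpt (e x)).get (hdom x) with hfdef
    have hf : Computable f :=
      (Partrec.rfindOpt he).of_eq fun x => (Part.some_get (hdom x)).symm
    refine ⟨f, hf, fun x y => ?_⟩
    have hx : R x (c (f x)) := hsound x _ (Part.get_mem (hdom x))
    have hy : R y (c (f y)) := hsound y _ (Part.get_mem (hdom y))
    rw [hKey]
    exact ⟨fun hxy => hEq.trans (hEq.symm hx) (hEq.trans hxy hy),
           fun hcc => hEq.trans hx (hEq.trans hcc (hEq.symm hy))⟩

theorem restriction_missing_k_classes (R : ℕ → ℕ → Prop) (k : ℕ)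
    (hR : IsCeer R) (W : Set ℕ) (hW_ne : W.Nonempty) (hW_ce : REPred (· ∈ W))
    (h : ℕ → ℕ) (hh : Computable h) (hrange : Set.range h = W)
    (g : Fin k → ℕ)
    (hg_ineq : ∀ i j, i ≠ j → ¬ R (g i) (g j))
    (hg_omitted : ∀ i, ∀ x ∈ W, ¬ R x (g i))
    (hg_all : ∀ y, (∀ x ∈ W, ¬ R x y) → ∃ i, R y (g i)) :
    CompEquiv (OplusId (fun x y => R (h x) (h y)) k) R := by
  classical
  obtain ⟨hEq, hRe⟩ := hR
  by_cases hk : k = 0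
  · subst hk
    refine aux_compEquiv R _ hEq hRe h hh (fun a b => ?_) (fun x => ?_)
    · simp [OplusId]
    · by_cases hx : ∃ w ∈ W, R x w
      · obtain ⟨w, hwW, hr⟩ := hx
        rw [← hrange] at hwW
        obtain ⟨n, rfl⟩ := hwW
        exact ⟨n, hr⟩
      · push_neg at hx
        obtain ⟨i, _⟩ := hg_all x (fun w hw hr => hx w hw (hEq.symm hr))
        exact i.elim0
  · have hk' : 0 < k := Nat.pos_of_ne_zero hk
    set L : List ℕ := List.ofFn g with hLdef
    have hL : ∀ u : ℕ, L.getD (u % k) 0 = g ⟨u % k, Nat.mod_lt u hk'⟩ := by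
      intro u
      have hlt : u % k < L.length := by
        simpa [hLdef] using Nat.mod_lt u hk'
      rw [List.getD_eq_getElem _ _ hlt]
      simp [hLdef]
    set c : ℕ → ℕ := fun n =>
      cond (decide (n % 2 = 0)) (h (n / 2)) (L.getD ((n / 2) % k) 0) with hcdef
    have hc : Computable c := by
      have hdec : Primrec fun n : ℕ => decide (n % 2 = 0) :=
        (Primrec.eq.comp (Primrec.nat_mod.comp Primrec.id (Primrec.const 2)) (Primrec.const 0)).decide
      exact Computable.cond hdec.to_comp
        (hh.comp (Primrec.nat_div.comp Primrec.id (Primrec.const 2)).to_comp)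
        (((Primrec.list_getD 0).comp (Primrec.const L)
          (Primrec.nat_mod.comp (Primrec.nat_div.comp Primrec.id (Primrec.const 2))
            (Primrec.const k))).to_comp)
    have hceven : ∀ u, c (2 * u) = h u := by
      intro u
      simp [hcdef, Nat.mul_mod_right, Nat.mul_div_cancel_left u (by norm_num : 0 < 2)]
    have hcodd : ∀ u, c (2 * u + 1) = g ⟨u % k, Nat.mod_lt u hk'⟩ := by
      intro u
      have h1 : (2 * u + 1) % 2 = 1 := by omega
      have h2 : (2 * u + 1) / 2 = u := by omega
      rw [← hL u]
      show cond (decide ((2 * u + 1) % 2 = 0)) (h ((2 * u + 1) / 2))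
        (L.getD ((2 * u + 1) / 2 % k) 0) = L.getD (u % k) 0
      rw [h1, h2]
      rfl
    have hmemW : ∀ u, h u ∈ W := by
      intro u; rw [← hrange]; exact ⟨u, rfl⟩
    refine aux_compEquiv R _ hEq hRe c hc (fun a b => ?_) (fun x => ?_)
    · rw [OplusId, if_neg hk]
      constructor
      · rintro (⟨u, v, rfl, rfl, huv⟩ | ⟨u, v, rfl, rfl, huv⟩)
        · rw [hceven, hceven]; exact huv
        · have : c (2 * u + 1) = c (2 * v + 1) := by
            rw [hcodd, hcodd]
            congr 1
            exact Fin.ext huv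
          rw [this]
          exact hEq.refl _
      · intro hr
        obtain ⟨u, hu⟩ : ∃ u, a = 2 * u ∨ a = 2 * u + 1 := ⟨a / 2, by omega⟩
        obtain ⟨v, hv⟩ : ∃ v, b = 2 * v ∨ b = 2 * v + 1 := ⟨b / 2, by omega⟩
        rcases hu with rfl | rfl <;> rcases hv with rfl | rfl
        · rw [hceven, hceven] at hr
          exact Or.inl ⟨u, v, rfl, rfl, hr⟩
        · rw [hceven, hcodd] at hr
          exact absurd hr (hg_omitted _ _ (hmemW u))
        · rw [hcodd, hceven] at hr
          exact absurd (hEq.symm hr) (hg_omitted _ _ (hmemW v))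
        · rw [hcodd, hcodd] at hr
          refine Or.inr ⟨u, v, rfl, rfl, ?_⟩
          show u % k = v % k
          by_contra hne
          exact hg_ineq ⟨u % k, Nat.mod_lt u hk'⟩ ⟨v % k, Nat.mod_lt v hk'⟩
            (fun hij => hne (congrArg Fin.val hij)) hr
    · by_cases hx : ∃ w ∈ W, R x w
      · obtain ⟨w, hwW, hr⟩ := hx
        rw [← hrange] at hwW
        obtain ⟨n, rfl⟩ := hwW
        exact ⟨2 * n, by rw [hceven]; exact hr⟩
      · push_neg at hx
        obtain ⟨i, hi⟩ := hg_all x (fun w hw hr => hx w hw (hEq.symm hr))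
        refine ⟨2 * i + 1, ?_⟩
        rw [hcodd]
        have : (⟨i.val % k, Nat.mod_lt _ hk'⟩ : Fin k) = i :=
          Fin.ext (Nat.mod_eq_of_lt i.isLt)
        rw [this]
        exact hi
end

section
/- Every dark ceer is self-full: if R is a ceer with infinitely many classes and no infinite c.e. transversal, then R ⊕ Id_1 ≰ R; equivalently, every computable reduction from R to R hits every R-equivalence class. -/
/-!
If `f` is a computable self-reduction of an equivalence relation `R` whose image misses the class
of `y`, then the orbit `y, f y, f (f y), …` is pairwise `R`-inequivalent, since `f` reflects `R`;
being the range of a computable function it is an infinite c.e. transversal. So in a dark ceer every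
self-reduction meets every class. A reduction `g` of `R ⊕ Id₁` to `R` would give the self-reduction
`x ↦ g (2x)`, whose image misses the class of `g 1`.
-/

theorem Computable.iterate {α : Type*} [Primcodable α] {f : α → α} (hf : Computable f) (a : α) :
    Computable fun n => f^[n] a := by
  refine (Computable.nat_rec (h := fun _ p => f p.2) Computable.id (Computable.const a)
    (hf.comp (Computable.snd.comp Computable.snd)).to₂).of_eq fun n => ?_
  induction n with
  | zero => rfl
  | succ n ih => rw [Function.iterate_succ_apply', ← ih]; rfl

theorem Computable.rePred_mem_range {α : Type*} [Primcodable α] [DecidableEq α] {f : ℕ → α}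
    (hf : Computable f) : REPred (· ∈ Set.range f) := by
  have hsearch : Partrec fun a => Nat.rfind fun n => Part.some (decide (f n = a)) :=
    Partrec.rfind (Computable₂.partrec₂
      (Primrec.eq.decide.to_comp.comp (hf.comp Computable.snd) Computable.fst))
  refine hsearch.dom_re.of_eq fun a => Nat.rfind_dom.trans ?_
  simp

section SelfReduction

variable {R : ℕ → ℕ → Prop} {f : ℕ → ℕ}

theorem rel_iterate_iff (hred : ∀ x y, R x y ↔ R (f x) (f y)) (n : ℕ) (a b : ℕ) :
    R (f^[n] a) (f^[n] b) ↔ R a b := by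
  induction n with
  | zero => rfl
  | succ n ih => rw [Function.iterate_succ_apply', Function.iterate_succ_apply', ← hred, ih]

theorem not_rel_iterate_of_lt (hR : Equivalence R) (hred : ∀ x y, R x y ↔ R (f x) (f y))
    {y : ℕ} (hy : ∀ x, ¬ R (f x) y) {n m : ℕ} (hnm : n < m) : ¬ R (f^[n] y) (f^[m] y) := by
  obtain ⟨k, rfl⟩ := Nat.exists_eq_add_of_lt hnm
  rw [add_assoc, Function.iterate_add_apply, rel_iterate_iff hred, Function.iterate_succ_apply']
  exact fun h => hy _ (hR.symm h)

theorem hasInfiniteTransversal_of_not_rel_apply (hR : Equivalence R) (hf : Computable f)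
    (hred : ∀ x y, R x y ↔ R (f x) (f y)) {y : ℕ} (hy : ∀ x, ¬ R (f x) y) :
    HasInfiniteTransversal R := by
  have horbit : ∀ {n m}, n ≠ m → ¬ R (f^[n] y) (f^[m] y) := fun hnm =>
    hnm.lt_or_gt.elim (not_rel_iterate_of_lt hR hred hy)
      fun h h' => not_rel_iterate_of_lt hR hred hy h (hR.symm h')
  have hinj : Function.Injective fun n => f^[n] y := fun n m heq =>
    not_not.mp fun hnm => horbit hnm ((show f^[n] y = f^[m] y from heq) ▸ hR.refl _)
  refine ⟨Set.range fun n => f^[n] y, (hf.iterate y).rePred_mem_range,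
    Set.infinite_range_of_injective hinj, ?_⟩
  rintro _ ⟨n, rfl⟩ _ ⟨m, rfl⟩ hne
  exact horbit fun h => hne (h ▸ rfl)

theorem exists_rel_apply_of_not_hasInfiniteTransversal (hR : Equivalence R)
    (hT : ¬ HasInfiniteTransversal R) (hf : Computable f) (hred : ∀ x y, R x y ↔ R (f x) (f y))
    (y : ℕ) : ∃ x, R (f x) y := by
  by_contra! hy
  exact hT (hasInfiniteTransversal_of_not_rel_apply hR hf hred hy)

end SelfReduction

section UJoin

variable {R S : ℕ → ℕ → Prop} {x y : ℕ}

theorem uJoin_two_mul_iff : UJoin R S (2 * x) (2 * y) ↔ R x y := by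
  refine ⟨?_, fun h => Or.inl ⟨x, y, rfl, rfl, h⟩⟩
  rintro (⟨u, v, hu, hv, h⟩ | ⟨u, v, hu, -, -⟩)
  · obtain rfl : u = x := by omega
    obtain rfl : v = y := by omega
    exact h
  · omega

theorem not_uJoin_two_mul_two_mul_add_one_s10 : ¬ UJoin R S (2 * x) (2 * y + 1) := by
  rintro (⟨u, v, -, hv, -⟩ | ⟨u, v, hu, -, -⟩) <;> omega

end UJoin

theorem dark_is_selffull (R : ℕ → ℕ → Prop) (hR : IsDark R) :
    ¬ CompReduces (UJoin R (IdN 1)) R ∧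
    ∀ f : ℕ → ℕ, Computable f → (∀ x y, R x y ↔ R (f x) (f y)) →
      ∀ y, ∃ x, R (f x) y := by
  obtain ⟨⟨hequiv, -⟩, -, hT⟩ := hR
  refine ⟨?_, fun _ hf hred => exists_rel_apply_of_not_hasInfiniteTransversal hequiv hT hf hred⟩
  rintro ⟨g, hg, hgred⟩
  obtain ⟨x, hx⟩ := exists_rel_apply_of_not_hasInfiniteTransversal hequiv hT
    (f := fun x => g (2 * x)) (hg.comp Primrec.nat_double.to_comp)
    (fun x y => uJoin_two_mul_iff.symm.trans (hgred _ _)) (g (2 * 0 + 1))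
  exact not_uJoin_two_mul_two_mul_add_one_s10 ((hgred _ _).mpr hx)
end

section
/- A ceer R is self-full if and only if every computable reduction φ : R → R is onto the classes of R (the range of φ intersects every R-class). -/
/-! A reduction `g : R → R` whose range misses the class of `y` extends to a reduction
`R ⊕ Id_1 → R` by sending the new point to `y`. Conversely, restricting a reduction
`f : R ⊕ Id_1 → R` to the evens gives a reduction `R → R` whose range misses the class of `f 1`. -/

def IsReduction (R S : ℕ → ℕ → Prop) (f : ℕ → ℕ) : Prop :=
  Computable f ∧ ∀ x y, R x y ↔ S (f x) (f y)

namespace UJoin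

variable {R S T : ℕ → ℕ → Prop}

@[simp]
theorem even_even (u v : ℕ) : UJoin R S (2 * u) (2 * v) ↔ R u v := by
  constructor
  · rintro (⟨u', v', hu, hv, h⟩ | ⟨_, _, hu, _, _⟩)
    · obtain rfl : u = u' := by omega
      obtain rfl : v = v' := by omega
      exact h
    · omega
  · exact fun h => Or.inl ⟨u, v, rfl, rfl, h⟩

@[simp]
theorem odd_odd (u v : ℕ) : UJoin R S (2 * u + 1) (2 * v + 1) ↔ S u v := by
  constructor
  · rintro (⟨_, _, hu, _, _⟩ | ⟨u', v', hu, hv, h⟩)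
    · omega
    · obtain rfl : u = u' := by omega
      obtain rfl : v = v' := by omega
      exact h
  · exact fun h => Or.inr ⟨u, v, rfl, rfl, h⟩

@[simp]
theorem not_even_odd (u v : ℕ) : ¬ UJoin R S (2 * u) (2 * v + 1) := by
  rintro (⟨_, _, _, _, _⟩ | ⟨_, _, _, _, _⟩) <;> omega

@[simp]
theorem not_odd_even (u v : ℕ) : ¬ UJoin R S (2 * u + 1) (2 * v) := by
  rintro (⟨_, _, _, _, _⟩ | ⟨_, _, _, _, _⟩) <;> omega

def interleave (g h : ℕ → ℕ) (n : ℕ) : ℕ :=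
  bif n.bodd then h n.div2 else g n.div2

@[simp]
theorem interleave_even (g h : ℕ → ℕ) (u : ℕ) : interleave g h (2 * u) = g u := by
  simp [interleave, Nat.div2_val]

@[simp]
theorem interleave_odd (g h : ℕ → ℕ) (u : ℕ) : interleave g h (2 * u + 1) = h u := by
  simp [interleave, Nat.div2_val]

theorem computable_interleave {g h : ℕ → ℕ} (hg : Computable g) (hh : Computable h) :
    Computable (interleave g h) :=
  Computable.cond Primrec.nat_bodd.to_comp (hh.comp Primrec.nat_div2.to_comp)
    (hg.comp Primrec.nat_div2.to_comp)

theorem isReduction_interleave (hT : ∀ ⦃x y⦄, T x y → T y x) {g h : ℕ → ℕ}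
    (hg : IsReduction R T g) (hh : IsReduction S T h) (hdisj : ∀ x y, ¬ T (g x) (h y)) :
    IsReduction (UJoin R S) T (interleave g h) := by
  refine ⟨computable_interleave hg.1 hh.1, fun a b => ?_⟩
  obtain ⟨u, rfl | rfl⟩ := Nat.even_or_odd' a <;> obtain ⟨v, rfl | rfl⟩ := Nat.even_or_odd' b
  · simpa using hg.2 u v
  · simpa using hdisj u v
  · simpa using fun hvu => hdisj v u (hT hvu)
  · simpa using hh.2 u v

theorem isReduction_comp_double {f : ℕ → ℕ} (hf : IsReduction (UJoin R S) T f) :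
    IsReduction R T (fun u => f (2 * u)) :=
  ⟨hf.1.comp (Primrec.nat_mul.comp (Primrec.const 2) Primrec.id).to_comp,
    fun u v => (even_even u v).symm.trans (hf.2 _ _)⟩

theorem not_rel_even_odd {f : ℕ → ℕ} (hf : IsReduction (UJoin R S) T f) (u v : ℕ) :
    ¬ T (f (2 * u)) (f (2 * v + 1)) :=
  fun h => not_even_odd u v ((hf.2 _ _).2 h)

end UJoin

theorem isReduction_idN_one_const {R : ℕ → ℕ → Prop} {y : ℕ} (hy : R y y) :
    IsReduction (IdN 1) R (fun _ => y) :=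
  ⟨Computable.const y, fun a b => by simpa [IdN, Nat.mod_one] using hy⟩

theorem selffull_iff_reductions_onto (R : ℕ → ℕ → Prop) (hR : IsCeer R) :
    (¬ CompReduces (UJoin R (IdN 1)) R) ↔
      (∀ f : ℕ → ℕ, Computable f → (∀ x y, R x y ↔ R (f x) (f y)) →
        ∀ y, ∃ x, R (f x) y) := by
  constructor
  · intro hfull g hg hred y
    by_contra! hmiss
    have hext : IsReduction (UJoin R (IdN 1)) R (UJoin.interleave g fun _ => y) :=
      UJoin.isReduction_interleave (fun _ _ => hR.1.symm) ⟨hg, hred⟩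
        (isReduction_idN_one_const (hR.1.refl y)) fun x _ => hmiss x
    exact hfull ⟨_, hext⟩
  · rintro honto ⟨f, hf⟩
    obtain ⟨hg, hgred⟩ := UJoin.isReduction_comp_double hf
    obtain ⟨x, hx⟩ := honto _ hg hgred (f 1)
    exact UJoin.not_rel_even_odd hf x 0 hx
end

section
/- If R is a dark minimal ceer, then any two distinct R-equivalence classes [a]_R ≠ [b]_R are computably inseparable: there is no computable set X with [a]_R ⊆ X and [b]_R ∩ X = ∅. -/
/-! A computable separator `X` splits ℕ into the two c.e. sets `X` and `Xᶜ`. Since there are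
infinitely many classes, one of them meets infinitely many classes, hence by dark minimality
every class, so it cannot avoid `[a]` resp. `[b]`. -/

theorem InfiniteClasses.meetsInfManyClasses_or_compl {R : ℕ → ℕ → Prop}
    (hinf : InfiniteClasses R) (X : Set ℕ) :
    MeetsInfManyClasses R X ∨ MeetsInfManyClasses R Xᶜ := by
  by_contra! h
  obtain ⟨⟨A, hA⟩, ⟨B, hB⟩⟩ : (∃ A : Finset ℕ, ∀ x ∈ X, ∃ a ∈ A, R x a) ∧
      ∃ B : Finset ℕ, ∀ x ∈ Xᶜ, ∃ b ∈ B, R x b := by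
    simpa [MeetsInfManyClasses] using h
  obtain ⟨x, hx⟩ := hinf (A ∪ B)
  by_cases hxX : x ∈ X
  · obtain ⟨a, ha, hxa⟩ := hA x hxX
    exact hx a (Finset.mem_union_left B ha) hxa
  · obtain ⟨b, hb, hxb⟩ := hB x hxX
    exact hx b (Finset.mem_union_right A hb) hxb

theorem dark_minimal_classes_inseparable_general (R : ℕ → ℕ → Prop)
    (hinf : InfiniteClasses R)
    (hmin : ∀ W : Set ℕ, REPred (· ∈ W) → MeetsInfManyClasses R W →
      ∀ y, ∃ x ∈ W, R x y)
    (a b : ℕ) :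
    ¬ ∃ X : Set ℕ, ComputablePred (· ∈ X) ∧ {x | R x a} ⊆ X ∧
      ∀ x, R x b → x ∉ X := by
  rintro ⟨X, hX, haX, hbX⟩
  rcases hinf.meetsInfManyClasses_or_compl X with hXinf | hXcinf
  · obtain ⟨x, hxX, hxb⟩ := hmin X hX.to_re hXinf b
    exact hbX x hxb hxX
  · obtain ⟨x, hxX, hxa⟩ := hmin Xᶜ hX.not.to_re hXcinf a
    exact hxX (haX hxa)

theorem dark_minimal_classes_inseparable (R : ℕ → ℕ → Prop) (hR : IsCeer R)
    (hinf : InfiniteClasses R)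
    (hmin : ∀ W : Set ℕ, REPred (· ∈ W) → MeetsInfManyClasses R W →
      ∀ y, ∃ x ∈ W, R x y)
    (a b : ℕ) (hab : ¬ R a b) :
    ¬ ∃ X : Set ℕ, ComputablePred (· ∈ X) ∧ {x | R x a} ⊆ X ∧
      ∀ x, R x b → x ∉ X :=
  dark_minimal_classes_inseparable_general R hinf hmin a b
end

section
/- If R is a dark minimal ceer and R ≤ S ⊕ Id_k for some k ≥ 1 and ceer S, then R ≤ S. -/
/-!
The classes of `S ⊕ Id_k` with odd codes are only `k` many, so the set `W` of numbers that the
reduction sends to even codes is computable and misses only finitely many `R`-classes. Dark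
minimality makes `W` meet every `R`-class; choosing one element of `W` for each of the `k` odd
classes gives a computable map into `W` within the `R`-class, and composing it with the
reduction lands in the `S`-part of the join.
-/

theorem uJoin_iff {S T : ℕ → ℕ → Prop} {x y : ℕ} :
    UJoin S T x y ↔
      (x % 2 = 0 ∧ y % 2 = 0 ∧ S (x / 2) (y / 2)) ∨
        (x % 2 = 1 ∧ y % 2 = 1 ∧ T (x / 2) (y / 2)) := by
  constructor
  · rintro (⟨u, v, rfl, rfl, h⟩ | ⟨u, v, rfl, rfl, h⟩)
    · left; simpa [Nat.mul_div_cancel_left] using h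
    · right; refine ⟨by omega, by omega, ?_⟩
      rwa [show (2 * u + 1) / 2 = u by omega, show (2 * v + 1) / 2 = v by omega]
  · rintro (⟨hx, hy, h⟩ | ⟨hx, hy, h⟩)
    · exact Or.inl ⟨x / 2, y / 2, by omega, by omega, h⟩
    · exact Or.inr ⟨x / 2, y / 2, by omega, by omega, h⟩

theorem exists_primrec_eq_of_lt (e : ℕ → ℕ) (k : ℕ) :
    ∃ h : ℕ → ℕ, Primrec h ∧ ∀ i < k, h i = e i :=
  ⟨fun i => ((List.range k).map e).getD i 0, (Primrec.list_getD 0).comp (.const _) .id,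
    fun i hi => by simp [List.getD, hi]⟩

section DarkMinimal

variable {R : ℕ → ℕ → Prop} {W : Set ℕ}

theorem meetsInfManyClasses_of_compl_covered (hinf : InfiniteClasses R) (A : Finset ℕ)
    (hA : ∀ x ∉ W, ∃ a ∈ A, R x a) : MeetsInfManyClasses R W := by
  intro B
  obtain ⟨x, hx⟩ := hinf (B ∪ A)
  refine ⟨x, ?_, fun b hb => hx b (Finset.mem_union_left _ hb)⟩
  by_contra hxW
  obtain ⟨a, ha, hxa⟩ := hA x hxW
  exact hx a (Finset.mem_union_right _ ha) hxa

theorem exists_finset_cover_of_fibers {c : ℕ → ℕ} {k : ℕ} (hck : ∀ x ∉ W, c x < k)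
    (hcR : ∀ x ∉ W, ∀ y ∉ W, c x = c y → R x y) :
    ∃ A : Finset ℕ, ∀ x ∉ W, ∃ a ∈ A, R x a := by
  classical
  let rep : ℕ → ℕ := fun i => if h : ∃ x ∉ W, c x = i then h.choose else 0
  refine ⟨(Finset.range k).image rep, fun x hx => ⟨rep (c x), ?_, ?_⟩⟩
  · exact Finset.mem_image_of_mem _ (Finset.mem_range.2 (hck x hx))
  · have h : ∃ y ∉ W, c y = c x := ⟨x, hx, rfl⟩
    obtain ⟨hyW, hyc⟩ := h.choose_spec
    simp only [rep, dif_pos h]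
    exact hcR x hx _ hyW hyc.symm

theorem exists_mem_rel_fiber (hR : Equivalence R) (hW : ∀ y, ∃ x ∈ W, R x y) {c : ℕ → ℕ}
    (hcR : ∀ x ∉ W, ∀ y ∉ W, c x = c y → R x y) (i : ℕ) :
    ∃ w ∈ W, ∀ x ∉ W, c x = i → R x w := by
  by_cases h : ∃ x₀ ∉ W, c x₀ = i
  · obtain ⟨x₀, hx₀W, rfl⟩ := h
    obtain ⟨w, hwW, hw⟩ := hW x₀
    exact ⟨w, hwW, fun x hxW hx => hR.trans (hcR x hxW x₀ hx₀W hx) (hR.symm hw)⟩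
  · obtain ⟨w, hwW, -⟩ := hW 0
    exact ⟨w, hwW, fun x hxW hx => absurd ⟨x, hxW, hx⟩ h⟩

theorem exists_computable_retraction (hR : Equivalence R) (hW : ∀ y, ∃ x ∈ W, R x y)
    (hWc : ComputablePred (· ∈ W)) {c : ℕ → ℕ} (hc : Computable c) {k : ℕ}
    (hck : ∀ x ∉ W, c x < k) (hcR : ∀ x ∉ W, ∀ y ∉ W, c x = c y → R x y) :
    ∃ g : ℕ → ℕ, Computable g ∧ ∀ x, g x ∈ W ∧ R x (g x) := by
  classical
  choose e heW heR using exists_mem_rel_fiber hR hW hcR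
  obtain ⟨h, hh, he⟩ := exists_primrec_eq_of_lt e k
  refine ⟨fun x => if x ∈ W then x else h (c x),
    hWc.ite Computable.id (hh.to_comp.comp hc), fun x => ?_⟩
  by_cases hxW : x ∈ W
  · simpa [hxW] using hR.refl x
  · simpa [hxW, he _ (hck x hxW)] using ⟨heW (c x), heR (c x) x hxW rfl⟩

theorem exists_computable_retraction_of_darkMinimal (hR : Equivalence R)
    (hinf : InfiniteClasses R)
    (hmin : ∀ W : Set ℕ, REPred (· ∈ W) → MeetsInfManyClasses R W → ∀ y, ∃ x ∈ W, R x y)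
    (hWc : ComputablePred (· ∈ W)) {c : ℕ → ℕ} (hc : Computable c) {k : ℕ}
    (hck : ∀ x ∉ W, c x < k) (hcR : ∀ x ∉ W, ∀ y ∉ W, c x = c y → R x y) :
    ∃ g : ℕ → ℕ, Computable g ∧ ∀ x, g x ∈ W ∧ R x (g x) := by
  obtain ⟨A, hA⟩ := exists_finset_cover_of_fibers hck hcR
  exact exists_computable_retraction hR
    (hmin W hWc.to_re (meetsInfManyClasses_of_compl_covered hinf A hA)) hWc hc hck hcR

end DarkMinimal

theorem compReduces_of_uJoin_of_retraction {R S T : ℕ → ℕ → Prop} (hR : Equivalence R)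
    {f : ℕ → ℕ} (hfc : Computable f) (hf : ∀ x y, R x y ↔ UJoin S T (f x) (f y)) {g : ℕ → ℕ}
    (hgc : Computable g) (hg : ∀ x, f (g x) % 2 = 0 ∧ R x (g x)) : CompReduces R S := by
  refine ⟨fun x => f (g x) / 2, Primrec.nat_div.to_comp.comp (hfc.comp hgc) (.const 2),
    fun x y => ?_⟩
  have hgxy : R x y ↔ R (g x) (g y) :=
    ⟨fun h => hR.trans (hR.trans (hR.symm (hg x).2) h) (hg y).2,
      fun h => hR.trans (hR.trans (hg x).2 h) (hR.symm (hg y).2)⟩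
  rw [hgxy, hf, uJoin_iff]
  have := (hg x).1
  have := (hg y).1
  constructor
  · rintro (⟨-, -, h⟩ | ⟨_, _, -⟩)
    · exact h
    · omega
  · exact fun h => Or.inl ⟨by omega, by omega, h⟩

theorem dark_minimal_reduces_through_idk_general (R S : ℕ → ℕ → Prop)
    (hR : IsCeer R)
    (hinf : InfiniteClasses R)
    (hmin : ∀ W : Set ℕ, REPred (· ∈ W) → MeetsInfManyClasses R W →
      ∀ y, ∃ x ∈ W, R x y)
    (k : ℕ) (hk : 1 ≤ k)
    (hred : CompReduces R (UJoin S (IdN k))) :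
    CompReduces R S := by
  obtain ⟨f, hfc, hf⟩ := hred
  have hWc : ComputablePred (· ∈ {x | f x % 2 = 0}) :=
    ComputablePred.computable_iff.2 ⟨fun x => decide (f x % 2 = 0),
      (Primrec.eq.comp (Primrec.nat_mod.comp .id (.const 2)) (.const 0)).decide.to_comp.comp hfc,
      by simp⟩
  have hodd : ∀ x ∉ {x | f x % 2 = 0}, ∀ y ∉ {x | f x % 2 = 0},
      f x / 2 % k = f y / 2 % k → R x y := fun x hx y hy hxy =>
    (hf x y).2 (uJoin_iff.2 (Or.inr ⟨by simp only [Set.mem_ofPred_eq] at hx; omega,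
      by simp only [Set.mem_ofPred_eq] at hy; omega, hxy⟩))
  obtain ⟨g, hgc, hg⟩ := exists_computable_retraction_of_darkMinimal hR.1 hinf hmin hWc
    (Primrec.nat_mod.to_comp.comp (Primrec.nat_div.to_comp.comp hfc (.const 2)) (.const k))
    (fun x _ => Nat.mod_lt _ hk) hodd
  exact compReduces_of_uJoin_of_retraction hR.1 hfc hf hgc hg

theorem dark_minimal_reduces_through_idk (R S : ℕ → ℕ → Prop)
    (hR : IsCeer R) (hS : IsCeer S)
    (hinf : InfiniteClasses R)
    (hmin : ∀ W : Set ℕ, REPred (· ∈ W) → MeetsInfManyClasses R W →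
      ∀ y, ∃ x ∈ W, R x y)
    (k : ℕ) (hk : 1 ≤ k)
    (hred : CompReduces R (UJoin S (IdN k))) :
    CompReduces R S :=
  dark_minimal_reduces_through_idk_general R S hR hinf hmin k hk hred
end

section
/- Let R be a ceer with infinitely many classes such that every c.e. set intersecting infinitely many R-classes intersects cofinitely many of them (a Z-dark minimal ceer condition). If W is a c.e. set intersecting infinitely many R-classes, then the R-closure of W is computable and every R-class disjoint from W is computable. -/
open Encodable Nat.Partrec Nat.Partrec.Code

namespace REPred

variable {α β ι : Type*} [Primcodable α] [Primcodable β]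

protected theorem comp {p : β → Prop} (hp : REPred p) {f : α → β} (hf : Computable f) :
    REPred fun a => p (f a) :=
  Partrec.comp hp hf

protected theorem false : REPred fun _ : α => False :=
  Partrec.none.of_eq fun _ => (Part.assert_neg not_false).symm

protected theorem and {p q : α → Prop} (hp : REPred p) (hq : REPred q) :
    REPred fun a => p a ∧ q a := by
  refine (Partrec.bind hp (Partrec.comp hq Computable.fst).to₂).of_eq fun a =>
    Part.ext fun u => ?_
  simp [Part.mem_assert_iff]

protected theorem or {p q : α → Prop} (hp : REPred p) (hq : REPred q) :
    REPred fun a => p a ∨ q a := by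
  obtain ⟨k, hk, H⟩ := Partrec.merge' hp hq
  refine hk.dom_re.of_eq fun a => (H a).2.trans ?_
  simp [Part.assert]

theorem exists_mem_of_finite {p : ι → α → Prop} {s : Set ι} (hs : s.Finite)
    (h : ∀ i ∈ s, REPred (p i)) : REPred fun a => ∃ i ∈ s, p i a := by
  induction s, hs using Set.Finite.induction_on with
  | empty => exact REPred.false.of_eq fun _ => by simp
  | @insert i s _ _ ih =>
    refine ((h i (s.mem_insert i)).or (ih fun j hj => h j (Set.mem_insert_of_mem i hj))).of_eq
      fun a => ?_
    simp

theorem exists_code {p : α → Prop} (hp : REPred p) :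
    ∃ c : Code, ∀ a, p a ↔ (eval c (encode a)).Dom := by
  obtain ⟨c, hc⟩ := Code.exists_code.1 hp
  exact ⟨c, fun a => by simp [hc, encodek, Part.assert]⟩

theorem exists_snd {q : α → β → Prop} (hq : REPred fun x : α × β => q x.1 x.2) :
    REPred fun a => ∃ b, q a b := by
  obtain ⟨c, hc⟩ := hq.exists_code
  -- dovetailing: search for a pair (s, b) such that `c` halts on `(a, b)` within `s` steps
  let f : α → ℕ → Option ℕ := fun a k =>
    (decode k : Option (ℕ × β)).bind fun sb => evaln sb.1 c (encode (a, sb.2))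
  have hf : Computable₂ f :=
    (Primrec.option_bind (Primrec.decode.comp Primrec.snd)
      (primrec_evaln.comp
        (((Primrec.fst.comp Primrec.snd).pair (Primrec.const c)).pair
          (Primrec.encode.comp ((Primrec.fst.comp Primrec.fst).pair
            (Primrec.snd.comp Primrec.snd))))).to₂).to_comp
  refine (Partrec.rfindOpt hf).dom_re.of_eq fun a => ?_
  rw [Nat.rfindOpt_dom]
  simp only [f, Option.mem_def, Option.bind_eq_some_iff]
  constructor
  · rintro ⟨-, x, ⟨s, b⟩, -, hx⟩
    exact ⟨b, (hc (a, b)).2 (Part.dom_iff_mem.2 ⟨x, evaln_complete.2 ⟨s, hx⟩⟩)⟩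
  · rintro ⟨b, hb⟩
    obtain ⟨x, hx⟩ := Part.dom_iff_mem.1 ((hc (a, b)).1 hb)
    obtain ⟨s, hs⟩ := evaln_complete.1 hx
    exact ⟨encode (s, b), x, (s, b), encodek _, hs⟩

end REPred

section Saturation

variable {α : Type*} {R : α → α → Prop} {W : Set α}

def saturation (R : α → α → Prop) (W : Set α) : Set α :=
  {x | ∃ y ∈ W, R x y}

theorem mem_saturation_of_rel (hR : Equivalence R) {x y : α} (hxy : R x y)
    (hy : y ∈ saturation R W) : x ∈ saturation R W :=
  let ⟨w, hw, hyw⟩ := hy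
  ⟨w, hw, hR.trans hxy hyw⟩

theorem notMem_saturation_iff (hR : Equivalence R) {A : Set α}
    (hA : ∀ y, (∀ a ∈ A, ¬ R y a) → ∃ w ∈ W, R w y) (x : α) :
    x ∉ saturation R W ↔ ∃ a ∈ A \ saturation R W, R x a := by
  constructor
  · intro hx
    by_contra! hxA
    refine hx ?_
    obtain ⟨w, hw, hwx⟩ := hA x fun a ha hxa =>
      hxA a ⟨ha, fun hsat => hx (mem_saturation_of_rel hR hxa hsat)⟩ hxa
    exact ⟨w, hw, hR.symm hwx⟩
  · rintro ⟨a, ⟨-, ha⟩, hxa⟩ hx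
    exact ha (mem_saturation_of_rel hR (hR.symm hxa) hx)

theorem not_rel_iff_mem_saturation_or (hR : Equivalence R) {a : α} (ha : ∀ w ∈ W, ¬ R w a)
    {B : Set α} (hB : ∀ x ∉ saturation R W, ∃ b ∈ B, R x b) (x : α) :
    ¬ R x a ↔ x ∈ saturation R W ∨ ∃ b ∈ {b ∈ B | ¬ R b a}, R x b := by
  constructor
  · refine fun hxa => or_iff_not_imp_left.2 fun hx => ?_
    obtain ⟨b, hb, hxb⟩ := hB x hx
    exact ⟨b, ⟨hb, fun hba => hxa (hR.trans hxb hba)⟩, hxb⟩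
  · rintro (⟨w, hw, hxw⟩ | ⟨b, ⟨-, hba⟩, hxb⟩) hxa
    · exact ha w hw (hR.trans (hR.symm hxw) hxa)
    · exact hba (hR.trans (hR.symm hxb) hxa)

theorem REPred.saturation [Primcodable α] (hR : REPred fun p : α × α => R p.1 p.2)
    (hW : REPred (· ∈ W)) : REPred (· ∈ saturation R W) :=
  REPred.exists_snd ((hW.comp Computable.snd).and hR)

end Saturation

theorem zdark_closure_computable_general (R : ℕ → ℕ → Prop) (hR : IsCeer R)
    (hcof : ∀ V : Set ℕ, REPred (· ∈ V) → MeetsInfManyClasses R V →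
      ∃ A : Finset ℕ, ∀ y, (∀ a ∈ A, ¬ R y a) → ∃ x ∈ V, R x y)
    (W : Set ℕ) (hW_ce : REPred (· ∈ W)) (hW_inf : MeetsInfManyClasses R W) :
    ComputablePred (fun x => ∃ y ∈ W, R x y) ∧
    ∀ a, (∀ x ∈ W, ¬ R x a) → ComputablePred (fun x => R x a) := by
  obtain ⟨hequiv, hR_re⟩ := hR
  obtain ⟨A, hA⟩ := hcof W hW_ce hW_inf
  have hclass (a : ℕ) : REPred fun x => R x a :=
    hR_re.comp (Computable.id.pair (Computable.const a))
  have hsat : REPred (· ∈ saturation R W) := REPred.saturation hR_re hW_ce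
  set B : Set ℕ := ↑A \ saturation R W
  have hB_fin : B.Finite := A.finite_toSet.sdiff
  have hB := notMem_saturation_iff hequiv hA
  refine ⟨ComputablePred.computable_iff_re_compl_re'.2 ⟨hsat, ?_⟩, fun a ha => ?_⟩
  · exact (REPred.exists_mem_of_finite hB_fin fun b _ => hclass b).of_eq fun x => (hB x).symm
  · refine ComputablePred.computable_iff_re_compl_re'.2 ⟨hclass a, ?_⟩
    have hB_a : {b ∈ B | ¬ R b a}.Finite := hB_fin.subset (Set.sep_subset _ _)
    exact (hsat.or (REPred.exists_mem_of_finite hB_a fun b _ => hclass b)).of_eq fun x =>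
      (not_rel_iff_mem_saturation_or hequiv ha (fun y => (hB y).1) x).symm

theorem zdark_closure_computable (R : ℕ → ℕ → Prop) (hR : IsCeer R)
    (hinf : InfiniteClasses R)
    (hcof : ∀ V : Set ℕ, REPred (· ∈ V) → MeetsInfManyClasses R V →
      ∃ A : Finset ℕ, ∀ y, (∀ a ∈ A, ¬ R y a) → ∃ x ∈ V, R x y)
    (W : Set ℕ) (hW_ce : REPred (· ∈ W)) (hW_inf : MeetsInfManyClasses R W) :
    ComputablePred (fun x => ∃ y ∈ W, R x y) ∧
    ∀ a, (∀ x ∈ W, ¬ R x a) → ComputablePred (fun x => R x a) :=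
  zdark_closure_computable_general R hR hcof W hW_ce hW_inf
end

section
/- The map X ↦ X ⊕ Id induces an embedding of the dark ceers modulo ≡_I into the light ceers modulo ≡_I: for dark ceers X and Y, X ≤_I Y if and only if X ⊕ Id ≤_I Y ⊕ Id. -/
/-!
Since `Id ⊕ Id ≡ Id`, for every `k` we have `Y ⊕ Id_k ≤ Y ⊕ Id` and `(Y ⊕ Id) ⊕ Id ≤ Y ⊕ Id`, so
both sides of the equivalence say `X ≤ Y ⊕ Id` once we know that, for dark `X`, a reduction
`f : X ≤ Y ⊕ Id` hits only finitely many classes of the `Id` part. Indeed the points `x` with `f x`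
odd and different from all `f y`, `y < x`, form a decidable transversal of `X`, so there are
finitely many of them, and `f` is then already a reduction `X ≤ Y ⊕ Id_k` for large `k`.
-/

def parityCases (f g : ℕ → ℕ) (x : ℕ) : ℕ :=
  if x % 2 = 0 then f (x / 2) else g (x / 2)

@[simp]
theorem parityCases_two_mul (f g : ℕ → ℕ) (a : ℕ) : parityCases f g (2 * a) = f a := by
  simp [parityCases]

@[simp]
theorem parityCases_two_mul_add_one (f g : ℕ → ℕ) (a : ℕ) :
    parityCases f g (2 * a + 1) = g a := by
  simp [parityCases, Nat.add_mod, show (2 * a + 1) / 2 = a by omega]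

theorem computable_two_mul : Computable (2 * · : ℕ → ℕ) :=
  (Primrec.nat_mul.comp (.const 2) .id).to_comp

theorem computable_two_mul_add_one : Computable (2 * · + 1 : ℕ → ℕ) :=
  (Primrec.nat_add.comp (Primrec.nat_mul.comp (.const 2) .id) (.const 1)).to_comp

theorem Computable.parityCases {f g : ℕ → ℕ} (hf : Computable f) (hg : Computable g) :
    Computable (parityCases f g) :=
  have half : Computable (· / 2 : ℕ → ℕ) := (Primrec.nat_div.comp .id (.const 2)).to_comp
  ComputablePred.ite (hf.comp half) (hg.comp half)
    (Primrec.eq.comp (Primrec.nat_mod.comp .id (.const 2)) (.const 0)).computablePred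

namespace UJoin

variable {R S : ℕ → ℕ → Prop} {a b : ℕ}

@[simp]
theorem inl_inl : UJoin R S (2 * a) (2 * b) ↔ R a b := by
  constructor
  · rintro (⟨u, v, hu, hv, h⟩ | ⟨u, v, hu, hv, h⟩)
    · obtain ⟨rfl, rfl⟩ : a = u ∧ b = v := by omega
      exact h
    · omega
  · exact fun h => .inl ⟨a, b, rfl, rfl, h⟩

@[simp]
theorem inr_inr : UJoin R S (2 * a + 1) (2 * b + 1) ↔ S a b := by
  constructor
  · rintro (⟨u, v, hu, hv, h⟩ | ⟨u, v, hu, hv, h⟩)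
    · omega
    · obtain ⟨rfl, rfl⟩ : a = u ∧ b = v := by omega
      exact h
  · exact fun h => .inr ⟨a, b, rfl, rfl, h⟩

@[simp]
theorem not_inl_inr : ¬ UJoin R S (2 * a) (2 * b + 1) := by
  rintro (⟨u, v, hu, hv, -⟩ | ⟨u, v, hu, hv, -⟩) <;> omega

@[simp]
theorem not_inr_inl : ¬ UJoin R S (2 * a + 1) (2 * b) := by
  rintro (⟨u, v, hu, hv, -⟩ | ⟨u, v, hu, hv, -⟩) <;> omega

end UJoin

namespace CompReduces

variable {R R' S S' T : ℕ → ℕ → Prop}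

protected theorem refl (R : ℕ → ℕ → Prop) : CompReduces R R :=
  ⟨id, .id, fun _ _ => .rfl⟩

protected theorem trans (h₁ : CompReduces R S) (h₂ : CompReduces S T) : CompReduces R T := by
  obtain ⟨f, hf, hfR⟩ := h₁
  obtain ⟨g, hg, hgS⟩ := h₂
  exact ⟨g ∘ f, hg.comp hf, fun x y => (hfR x y).trans (hgS _ _)⟩

theorem uJoin_of_disjoint {f g : ℕ → ℕ} (hf : Computable f) (hg : Computable g)
    (hR : ∀ a b, R a b ↔ T (f a) (f b)) (hS : ∀ a b, S a b ↔ T (g a) (g b))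
    (hRS : ∀ a b, ¬ T (f a) (g b)) (hSR : ∀ a b, ¬ T (g a) (f b)) :
    CompReduces (UJoin R S) T := by
  refine ⟨parityCases f g, hf.parityCases hg, fun x y => ?_⟩
  rcases Nat.even_or_odd' x with ⟨a, rfl | rfl⟩ <;>
    rcases Nat.even_or_odd' y with ⟨b, rfl | rfl⟩ <;> simp [hR, hS, hRS, hSR]

theorem uJoin_inl : CompReduces R (UJoin R S) :=
  ⟨(2 * ·), computable_two_mul, by simp⟩

theorem uJoin (hR : CompReduces R R') (hS : CompReduces S S') :
    CompReduces (UJoin R S) (UJoin R' S') := by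
  obtain ⟨f, hf, hfR⟩ := hR
  obtain ⟨g, hg, hgS⟩ := hS
  exact uJoin_of_disjoint (f := (2 * f ·)) (g := (2 * g · + 1))
    (computable_two_mul.comp hf) (computable_two_mul_add_one.comp hg)
    (by simpa using hfR) (by simpa using hgS) (by simp) (by simp)

end CompReduces

section Absorption

variable {R S : ℕ → ℕ → Prop}

theorem compReduces_idN_eq (k : ℕ) : CompReduces (IdN k) (· = ·) :=
  ⟨(· % k), (Primrec.nat_mod.comp .id (.const k)).to_comp, fun _ _ => .rfl⟩

theorem compReduces_oplusId_uJoin_eq (S : ℕ → ℕ → Prop) (k : ℕ) :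
    CompReduces (OplusId S k) (UJoin S (· = ·)) := by
  unfold OplusId
  split_ifs
  · exact .uJoin_inl
  · exact (CompReduces.refl S).uJoin (compReduces_idN_eq k)

theorem compReduces_uJoin_uJoin_eq (S : ℕ → ℕ → Prop) :
    CompReduces (UJoin (UJoin S (· = ·)) (· = ·)) (UJoin S (· = ·)) := by
  refine .uJoin_of_disjoint (f := parityCases (2 * ·) (2 * (2 * ·) + 1))
    (g := (2 * (2 * · + 1) + 1)) (computable_two_mul.parityCases
      (computable_two_mul_add_one.comp computable_two_mul))
    (computable_two_mul_add_one.comp computable_two_mul_add_one) ?_ ?_ ?_ ?_ <;>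
  · intro a b
    rcases Nat.even_or_odd' a with ⟨a, rfl | rfl⟩ <;>
      rcases Nat.even_or_odd' b with ⟨b, rfl | rfl⟩ <;> simp <;> omega

theorem reducesI_uJoin_eq_iff :
    ReducesI R (UJoin S (· = ·)) ↔ CompReduces R (UJoin S (· = ·)) :=
  ⟨fun ⟨k, h⟩ => h.trans ((compReduces_oplusId_uJoin_eq _ k).trans
    (compReduces_uJoin_uJoin_eq S)), fun h => ⟨0, h⟩⟩

theorem compReduces_uJoin_eq_iff :
    CompReduces (UJoin R (· = ·)) (UJoin S (· = ·)) ↔ CompReduces R (UJoin S (· = ·)) :=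
  ⟨CompReduces.uJoin_inl.trans,
    fun h => (h.uJoin (.refl _)).trans (compReduces_uJoin_uJoin_eq S)⟩

end Absorption

section Dark

variable {X T Y : ℕ → ℕ → Prop}

theorem finite_inter_range_of_not_hasInfiniteTransversal (hX : ¬ HasInfiniteTransversal X)
    {f : ℕ → ℕ} (hf : Computable f) (hfX : ∀ x y, X x y ↔ T (f x) (f y))
    {W : Set ℕ} (hW : ComputablePred (· ∈ W)) (hTW : ∀ a ∈ W, ∀ b ∈ W, T a b → a = b) :
    (W ∩ Set.range f).Finite := by
  classical
  set first : ℕ → ℕ := fun x => Nat.find (⟨x, rfl⟩ : ∃ y, f y = f x) with hfirst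
  have first_spec (x : ℕ) : f (first x) = f x := Nat.find_spec (⟨x, rfl⟩ : ∃ y, f y = f x)
  have first_congr {x y : ℕ} (h : f x = f y) : first x = first y := by
    simp only [hfirst, h]
  have hfirst_comp : Computable first :=
    Computable.find (P := fun x y => f y = f x)
      (Primrec.eq.decide.to_comp.comp (hf.comp .snd) (hf.comp .fst)).computablePred
      fun x => ⟨x, rfl⟩
  set S : Set ℕ := {x | f x ∈ W ∧ first x = x}
  have hS : ComputablePred (· ∈ S) := by
    obtain ⟨_, hWc⟩ := hW
    exact ((Primrec.and.to_comp.comp (hWc.comp hf)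
      (Primrec.eq.decide.to_comp.comp hfirst_comp .id)).of_eq (by simp [S])).computablePred
  have hS_transversal : ∀ x ∈ S, ∀ y ∈ S, x ≠ y → ¬ X x y := by
    rintro x ⟨hxW, hx⟩ y ⟨hyW, hy⟩ hxy hXxy
    exact hxy (hx ▸ hy ▸ first_congr (hTW _ hxW _ hyW ((hfX x y).1 hXxy)))
  have hS_finite : S.Finite := by
    by_contra hinf
    exact hX ⟨S, hS.to_re, hinf, hS_transversal⟩
  refine (hS_finite.image f).subset ?_
  rintro _ ⟨hW, x, rfl⟩
  exact ⟨first x, ⟨(first_spec x).symm ▸ hW, first_congr (first_spec x)⟩, first_spec x⟩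

theorem reducesI_of_compReduces_uJoin_eq (hX : ¬ HasInfiniteTransversal X)
    (h : CompReduces X (UJoin Y (· = ·))) : ReducesI X Y := by
  obtain ⟨f, hf, hfX⟩ := h
  have hfin : ({v | v % 2 = 1} ∩ Set.range f).Finite := by
    refine finite_inter_range_of_not_hasInfiniteTransversal hX hf hfX
      (Primrec.eq.comp (Primrec.nat_mod.comp .id (.const 2)) (.const 1)).computablePred ?_
    rintro a ha b hb hab
    obtain ⟨a, rfl⟩ : ∃ a', a = 2 * a' + 1 := ⟨a / 2, by rw [Set.mem_ofPred_eq] at ha; omega⟩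
    obtain ⟨b, rfl⟩ : ∃ b', b = 2 * b' + 1 := ⟨b / 2, by rw [Set.mem_ofPred_eq] at hb; omega⟩
    simpa using hab
  obtain ⟨N, hN⟩ := hfin.bddAbove
  refine ⟨N + 1, f, hf, fun x y => ?_⟩
  have hbound (x a : ℕ) (ha : f x = 2 * a + 1) : a < N + 1 := by
    have := hN ⟨show f x % 2 = 1 by omega, x, rfl⟩
    omega
  rw [OplusId, if_neg N.succ_ne_zero, hfX]
  rcases Nat.even_or_odd' (f x) with ⟨a, ha | ha⟩ <;>
    rcases Nat.even_or_odd' (f y) with ⟨b, hb | hb⟩ <;> simp only [ha, hb, UJoin.inl_inl,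
      UJoin.inr_inr, UJoin.not_inl_inr, UJoin.not_inr_inl]
  simp only [IdN, Nat.mod_eq_of_lt (hbound x a ha), Nat.mod_eq_of_lt (hbound y b hb)]

theorem reducesI_iff_compReduces_uJoin_eq (hX : ¬ HasInfiniteTransversal X) :
    ReducesI X Y ↔ CompReduces X (UJoin Y (· = ·)) :=
  ⟨fun ⟨k, h⟩ => h.trans (compReduces_oplusId_uJoin_eq Y k),
    reducesI_of_compReduces_uJoin_eq hX⟩

end Dark

theorem iota_embedding_general (X Y : ℕ → ℕ → Prop) (hX : IsDark X) :
    ReducesI X Y ↔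
      ReducesI (UJoin X (fun x y : ℕ => x = y)) (UJoin Y (fun x y : ℕ => x = y)) := by
  rw [reducesI_uJoin_eq_iff, compReduces_uJoin_eq_iff,
    reducesI_iff_compReduces_uJoin_eq hX.2.2]

theorem iota_embedding (X Y : ℕ → ℕ → Prop) (hX : IsDark X) (hY : IsDark Y) :
    ReducesI X Y ↔
      ReducesI (UJoin X (fun x y : ℕ => x = y)) (UJoin Y (fun x y : ℕ => x = y)) :=
  iota_embedding_general X Y hX
end
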